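/- arXiv:2504.19671 — 5 statements merged into one kernel-verified Lean document; each statement's English description precedes it below -/
import Mathlib

section
/- If G is a connected graph and X is the set of simplicial vertices of G, then any subset of X is a total general position set; in particular the total general position number of G equals the number of simplicial vertices of G. -/
/-! A vertex lies in the interior of some shortest path iff it is not simplicial. Its two
neighbours on a shortest path are distinct and non-adjacent, since otherwise the path could be
shortened; conversely, two non-adjacent neighbours `u, w` of `v` make `u v w` a shortest path.
So the total general position sets are exactly the sets of simplicial vertices. -/

open SimpleGraph

/-- A walk is a shortest path: it is a path whose length equals the graph distance. -/
def IsShortest {V : Type*} (G : SimpleGraph V) {u v : V} (p : G.Walk u v) : Prop :=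
  p.IsPath ∧ p.length = G.dist u v

/-- `u` and `v` are `X`-visible: some shortest `u,v`-path meets `X` only in `{u,v}`. -/
def Visible {V : Type*} (G : SimpleGraph V) (X : Set V) (u v : V) : Prop :=
  ∃ p : G.Walk u v, IsShortest G p ∧ ∀ w ∈ p.support, w ∈ X → w = u ∨ w = v

/-- `u` and `v` are `X`-positionable: every shortest `u,v`-path meets `X` only in `{u,v}`. -/
def Positionable {V : Type*} (G : SimpleGraph V) (X : Set V) (u v : V) : Prop :=
  ∀ p : G.Walk u v, IsShortest G p → ∀ w ∈ p.support, w ∈ X → w = u ∨ w = v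

def MutualVisibilitySet {V : Type*} (G : SimpleGraph V) (X : Set V) : Prop :=
  ∀ u ∈ X, ∀ v ∈ X, Visible G X u v

def TotalMVSet {V : Type*} (G : SimpleGraph V) (X : Set V) : Prop :=
  ∀ u v : V, Visible G X u v

def OuterMVSet {V : Type*} (G : SimpleGraph V) (X : Set V) : Prop :=
  MutualVisibilitySet G X ∧ ∀ u ∈ X, ∀ v ∉ X, Visible G X u v

def DualMVSet {V : Type*} (G : SimpleGraph V) (X : Set V) : Prop :=
  MutualVisibilitySet G X ∧ ∀ u ∉ X, ∀ v ∉ X, Visible G X u v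

def GeneralPositionSet {V : Type*} (G : SimpleGraph V) (X : Set V) : Prop :=
  ∀ u ∈ X, ∀ v ∈ X, Positionable G X u v

def TotalGPSet {V : Type*} (G : SimpleGraph V) (X : Set V) : Prop :=
  ∀ u v : V, Positionable G X u v

def OuterGPSet {V : Type*} (G : SimpleGraph V) (X : Set V) : Prop :=
  GeneralPositionSet G X ∧ ∀ u ∈ X, ∀ v ∉ X, Positionable G X u v

def DualGPSet {V : Type*} (G : SimpleGraph V) (X : Set V) : Prop :=
  GeneralPositionSet G X ∧ ∀ u ∉ X, ∀ v ∉ X, Positionable G X u v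

/-- The maximum cardinality of a set of vertices satisfying `P`. -/
noncomputable def maxCard {V : Type*} (P : Set V → Prop) : ℕ :=
  sSup {n : ℕ | ∃ X : Set V, P X ∧ X.ncard = n}

/-- The number of sets achieving `maxCard P`. -/
noncomputable def numMaxSets {V : Type*} (P : Set V → Prop) : ℕ :=
  {X : Set V | P X ∧ X.ncard = maxCard P}.ncard

/-- A vertex is simplicial if its neighborhood induces a complete graph. -/
def Simplicial {V : Type*} (G : SimpleGraph V) (v : V) : Prop :=
  ∀ u w : V, G.Adj v u → G.Adj v w → u ≠ w → G.Adj u w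

/-- A set of vertices is convex: every shortest path between its vertices stays inside it. -/
def ConvexSet {V : Type*} (G : SimpleGraph V) (S : Set V) : Prop :=
  ∀ u ∈ S, ∀ v ∈ S, ∀ p : G.Walk u v, IsShortest G p → ∀ w ∈ p.support, w ∈ S

section

variable {V : Type*} {G : SimpleGraph V}

theorem Simplicial.eq_or_eq_of_mem_support {a b w : V} (hw : Simplicial G w) (p : G.Walk a b)
    (hp : p.length = G.dist a b) (hwp : w ∈ p.support) : w = a ∨ w = b := by
  by_contra! hne
  obtain ⟨q, r, rfl⟩ := Walk.mem_support_iff_exists_append.mp hwp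
  obtain ⟨x, hwx, q', hq'⟩ := Walk.exists_eq_cons_of_ne hne.1 q.reverse
  obtain ⟨y, hwy, r', rfl⟩ := Walk.exists_eq_cons_of_ne hne.2 r
  have hq : q.length = q'.length + 1 := by
    rw [← Walk.length_reverse, hq', Walk.length_cons]
  rw [Walk.length_append, Walk.length_cons, hq] at hp
  by_cases hxy : x = y
  · subst hxy
    have := G.dist_le (q'.reverse.append r')
    rw [Walk.length_append, Walk.length_reverse] at this
    omega
  · have := G.dist_le (q'.reverse.append (.cons (hw x y hwx hwy hxy) r'))
    rw [Walk.length_append, Walk.length_reverse, Walk.length_cons] at this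
    omega

theorem totalGPSet_of_subset_simplicial {X : Set V} (hX : X ⊆ {v | Simplicial G v}) :
    TotalGPSet G X :=
  fun _ _ p hp _ hw hwX => (hX hwX).eq_or_eq_of_mem_support p hp.2 hw

theorem SimpleGraph.Walk.isShortest_cons_cons {u v w : V} (huv : G.Adj u v) (hvw : G.Adj v w) (huw : u ≠ w)
    (hnadj : ¬ G.Adj u w) : IsShortest G (.cons huv (.cons hvw .nil)) := by
  refine ⟨?_, ?_⟩
  · simp [huv.ne, hvw.ne, huw]
  · have : G.edist u w = 2 := edist_eq_two_iff.mpr ⟨huw, hnadj, ⟨v, huv, hvw.symm⟩⟩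
    simp [dist, this]

theorem TotalGPSet.subset_simplicial {X : Set V} (hX : TotalGPSet G X) :
    X ⊆ {v | Simplicial G v} := by
  intro v hvX u w hvu hvw huw
  by_contra hnadj
  have := hX u w _ (Walk.isShortest_cons_cons hvu.symm hvw huw hnadj) v (by simp) hvX
  exact this.elim hvu.ne hvw.ne

theorem totalGPSet_iff_subset_simplicial {X : Set V} :
    TotalGPSet G X ↔ X ⊆ {v | Simplicial G v} :=
  ⟨TotalGPSet.subset_simplicial, totalGPSet_of_subset_simplicial⟩

end

theorem maxCard_subset {V : Type*} {S : Set V} (hS : S.Finite) : maxCard (· ⊆ S) = S.ncard := by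
  have hbdd : ∀ n ∈ {n : ℕ | ∃ X : Set V, X ⊆ S ∧ X.ncard = n}, n ≤ S.ncard := by
    rintro _ ⟨X, hXS, rfl⟩
    exact Set.ncard_le_ncard hXS hS
  exact le_antisymm (csSup_le ⟨_, S, le_rfl, rfl⟩ hbdd) (le_csSup ⟨_, hbdd⟩ ⟨S, le_rfl, rfl⟩)

theorem stmt_0_general {V : Type*} [Fintype V] (G : SimpleGraph V) :
    (∀ Y : Set V, Y ⊆ {v | Simplicial G v} → TotalGPSet G Y) ∧
    maxCard (TotalGPSet G) = {v | Simplicial G v}.ncard := by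
  have hTotal : TotalGPSet G = (· ⊆ {v | Simplicial G v}) :=
    funext fun _ => propext totalGPSet_iff_subset_simplicial
  exact ⟨fun _ => totalGPSet_of_subset_simplicial, hTotal ▸ maxCard_subset (Set.toFinite _)⟩

/-- Total general position sets are exactly subsets of the simplicial vertices;
in particular `gp_t(G) = s(G)`. -/
theorem stmt_0 {V : Type*} [Fintype V] (G : SimpleGraph V) (hG : G.Connected) :
    (∀ Y : Set V, Y ⊆ {v | Simplicial G v} → TotalGPSet G Y) ∧
    maxCard (TotalGPSet G) = {v | Simplicial G v}.ncard :=
  stmt_0_general G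
end

section
/- If H is a convex subgraph of a graph G and X is a mutual-visibility set of G, then X ∩ V(H) is a mutual-visibility set of H. -/
/-!
By convexity, a shortest `u,v`-path of `G` witnessing the visibility of `u` and `v` runs inside `S`,
so it is a walk of `G[S]`. The inclusion `G[S] → G` cannot shorten distances, hence this walk is a
shortest path of `G[S]` as well, and it still meets `X` only at its ends.
-/

open SimpleGraph

namespace SimpleGraph

variable {V W : Type*} {G : SimpleGraph V} {G' : SimpleGraph W}

lemma Reachable.dist_map_le (f : G →g G') {u v : V} (h : G.Reachable u v) :
    G'.dist (f u) (f v) ≤ G.dist u v := by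
  obtain ⟨p, hp⟩ := h.exists_walk_length_eq_dist
  calc G'.dist (f u) (f v) ≤ (p.map f).length := dist_le _
    _ = G.dist u v := by rw [Walk.length_map, hp]

lemma Walk.isShortest_of_map (f : G →g G') {u v : V} (p : G.Walk u v)
    (hp : IsShortest G' (p.map f)) : IsShortest G p := by
  refine ⟨hp.1.of_map, le_antisymm ?_ (dist_le p)⟩
  calc p.length = (p.map f).length := (Walk.length_map f p).symm
    _ = G'.dist (f u) (f v) := hp.2
    _ ≤ G.dist u v := Reachable.dist_map_le f ⟨p⟩

end SimpleGraph

/-- If `S` induces a convex subgraph of `G` and `X` is a mutual-visibility set of `G`,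
then `X ∩ S` is a mutual-visibility set of the subgraph induced by `S`. -/
theorem stmt_2 {V : Type*} (G : SimpleGraph V) (S : Set V) (X : Set V)
    (hS : ConvexSet G S) (hX : MutualVisibilitySet G X) :
    MutualVisibilitySet (SimpleGraph.induce S G) (Subtype.val ⁻¹' X) := by
  intro u hu v hv
  obtain ⟨p, hp, hpX⟩ := hX u hu v hv
  have hpS : ∀ w ∈ p.support, w ∈ S := hS u u.2 v v.2 p hp
  refine ⟨p.induce S hpS, (p.induce S hpS).isShortest_of_map (Embedding.induce S).toHom
    (by rwa [Walk.map_induce]), fun w hw hwX => ?_⟩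
  rw [Walk.support_induce, List.mem_attachWith] at hw
  exact (hpX w hw hwX).imp Subtype.ext Subtype.ext
end

section
/- If G is a connected graph and X ⊆ V(G), then X is a total mutual-visibility set of G if and only if any two vertices u,v of G with d_G(u,v) = 2 are X-visible. -/
open SimpleGraph

/-!
Induct on `d(u, v)`. For `d(u, v) ≥ 3`, let `x` be the neighbour of `u` on a shortest `u,v`-path.
By induction `x` and `v` are visible through a shortest path `x y … v`; its vertex `y` is
interior, hence not in `X`, and `d(u, y) = 2`. Gluing a visible shortest `u,y`-path to the
`y,v`-part of the `x,v`-path gives a walk of length `d(u, v)` whose only vertex in `X`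
can be `u` or `v`.
-/

section

variable {V : Type*} {G : SimpleGraph V} {X : Set V} {u v w : V}

theorem isShortest_iff {p : G.Walk u v} : IsShortest G p ↔ p.length = G.dist u v :=
  ⟨And.right, fun h => ⟨p.isPath_of_length_eq_dist h, h⟩⟩

theorem visible_self (G : SimpleGraph V) (X : Set V) (u : V) : Visible G X u u :=
  ⟨.nil, isShortest_iff.2 (by simp), by simp⟩

theorem SimpleGraph.Adj.visible (h : G.Adj u v) : Visible G X u v :=
  ⟨h.toWalk, isShortest_iff.2 (dist_eq_one_iff_adj.2 h).symm, by simp⟩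

theorem SimpleGraph.Reachable.exists_adj_dist_eq_add_one (h : G.Reachable u v) (hne : u ≠ v) :
    ∃ w, G.Adj u w ∧ G.dist u v = G.dist w v + 1 := by
  obtain ⟨p, hp⟩ := h.exists_walk_length_eq_dist
  cases p with
  | nil => exact absurd rfl hne
  | cons hux q =>
    exact ⟨_, hux, by rw [← hp, ← length_eq_dist_of_subwalk hp (q.isSubwalk_cons hux)]; rfl⟩

theorem Visible.trans (huw : Visible G X u w) (hwv : Visible G X w v) (hw : w ∉ X)
    (hd : G.dist u w + G.dist w v = G.dist u v) : Visible G X u v := by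
  obtain ⟨p, hp, hpX⟩ := huw
  obtain ⟨q, hq, hqX⟩ := hwv
  refine ⟨p.append q, isShortest_iff.2 (by rw [Walk.length_append, hp.2, hq.2, hd]), ?_⟩
  intro x hx hxX
  rcases (Walk.mem_support_append_iff _ _).1 hx with hx | hx
  · rcases hpX x hx hxX with rfl | rfl
    · exact .inl rfl
    · exact absurd hxX hw
  · rcases hqX x hx hxX with rfl | rfl
    · exact absurd hxX hw
    · exact .inr rfl

theorem Visible.exists_adj_visible (h : Visible G X u v) (hd : 2 ≤ G.dist u v) :
    ∃ w, G.Adj u w ∧ w ∉ X ∧ G.dist u v = G.dist w v + 1 ∧ Visible G X w v := by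
  obtain ⟨p, ⟨hpath, hplen⟩, hpX⟩ := h
  cases p with
  | nil => simp at hd
  | @cons _ w _ hux q =>
    have hq : q.length = G.dist w v := length_eq_dist_of_subwalk hplen (q.isSubwalk_cons hux)
    have hlen : (q.cons hux).length = q.length + 1 := rfl
    refine ⟨w, hux, fun hwX => ?_, by omega, q, isShortest_iff.2 hq, ?_⟩
    · rcases hpX w (by simp) hwX with rfl | rfl
      · exact hux.ne rfl
      · rw [dist_self] at hq
        omega
    · intro x hx hxX
      rcases hpX x (by simp [hx]) hxX with rfl | rfl
      · exact absurd hx ((Walk.cons_isPath_iff _ _).1 hpath).2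
      · exact .inr rfl

theorem SimpleGraph.Connected.totalMVSet_of_visible_of_dist_eq_two (hG : G.Connected)
    (h2 : ∀ u v, G.dist u v = 2 → Visible G X u v) : TotalMVSet G X := by
  suffices ∀ n u v, G.dist u v = n → Visible G X u v from fun u v => this _ u v rfl
  intro n
  induction n using Nat.strong_induction_on with
  | _ n ih =>
    intro u v hn
    match n, ih with
    | 0, _ => exact hG.dist_eq_zero_iff.1 hn ▸ visible_self G X u
    | 1, _ => exact (dist_eq_one_iff_adj.1 hn).visible
    | 2, _ => exact h2 u v hn
    | n + 3, ih =>
      obtain ⟨x, hux, hx⟩ := (hG u v).exists_adj_dist_eq_add_one (by rintro rfl; simp at hn)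
      obtain ⟨y, hxy, hyX, hy, hyv⟩ := (ih (n + 2) (by omega) x v (by omega)).exists_adj_visible
        (by omega)
      have hdux : G.dist u x = 1 := dist_eq_one_iff_adj.2 hux
      have hdxy : G.dist x y = 1 := dist_eq_one_iff_adj.2 hxy
      have huy : G.dist u y = 2 := by
        have := hG.dist_triangle (u := u) (v := x) (w := y)
        have := hG.dist_triangle (u := u) (v := y) (w := v)
        omega
      exact (h2 u y huy).trans hyv hyX (by omega)

end

/-- `X` is a total mutual-visibility set iff every two vertices at distance 2 are
`X`-visible. -/
theorem stmt_3 {V : Type*} (G : SimpleGraph V) (hG : G.Connected) (X : Set V) :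
    TotalMVSet G X ↔ ∀ u v : V, G.dist u v = 2 → Visible G X u v :=
  ⟨fun h u v _ => h u v, hG.totalMVSet_of_visible_of_dist_eq_two⟩
end

section
/- If G is a connected graph and X is a general position set of G, then X is a dual general position set if and only if the subgraph G − X (induced on V(G) \ X) is convex in G. -/
open SimpleGraph

theorem forall_positionable_compl_iff_convexSet_compl {V : Type*} (G : SimpleGraph V) (X : Set V) :
    (∀ u ∉ X, ∀ v ∉ X, Positionable G X u v) ↔ ConvexSet G Xᶜ := by
  constructor
  · rintro h u hu v hv p hp w hw hwX
    rcases h u hu v hv p hp w hw hwX with rfl | rfl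
    · exact hu hwX
    · exact hv hwX
  · intro h u hu v hv p hp w hw hwX
    exact (h u hu v hv p hp w hw hwX).elim

theorem stmt_4_general {V : Type*} (G : SimpleGraph V) (X : Set V)
    (hX : GeneralPositionSet G X) :
    DualGPSet G X ↔ ConvexSet G Xᶜ :=
  (and_iff_right hX).trans (forall_positionable_compl_iff_convexSet_compl G X)

/-- A general position set `X` is a dual general position set iff `G - X` is convex. -/
theorem stmt_4 {V : Type*} (G : SimpleGraph V) (hG : G.Connected) (X : Set V)
    (hX : GeneralPositionSet G X) :
    DualGPSet G X ↔ ConvexSet G Xᶜ :=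
  stmt_4_general G X hX
end

section
/- For n ≥ 1, the total general position number and the dual general position number of the Sierpiński graph S_3^n are both 3, and in each case {0^n, 1^n, 2^n} is the unique maximum set. -/
/-!
The extreme vertices are simplicial, so no shortest path passes through them, and the three of
them form a total, hence dual, general position set.

The vertices of `S_p^(n+1)` sharing the first `n` coordinates form a clique, and the other edges
are link edges between cliques: every vertex has at most one link edge, every non-extreme
vertex has one, and two cliques are joined by at most one. So if `x` is not extreme, with link
neighbour `y` and another vertex `x'` of its clique, the path `x' x y` is a shortest path, which
excludes `x` from every total general position set. If `x` lies in a dual general position set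
`X`, the shortest paths `x' x y` and `x' x y y'` force `y ∉ X`; then `x' x y` forces the whole
clique of `x` into `X`. For `p ≥ 3` that clique contains two non-extreme vertices `y₁, y₂`, and
with their link neighbours `l₁, l₂ ∉ X` the shortest path `l₁ y₁ y₂ l₂` contradicts
positionability.
-/

open SimpleGraph

/-- The Sierpiński graph `S_p^n` on vertex set `[p]_0^n`. -/
def Sierpinski (p n : ℕ) : SimpleGraph (Fin n → Fin p) where
  Adj i j := ∃ h : Fin n, (∀ t, t < h → i t = j t) ∧ i h ≠ j h ∧
      (∀ t, h < t → i t = j h ∧ j t = i h)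
  symm := by
    constructor
    rintro i j ⟨h, h1, h2, h3⟩
    exact ⟨h, fun t ht => (h1 t ht).symm, fun e => h2 e.symm,
      fun t ht => ⟨(h3 t ht).2, (h3 t ht).1⟩⟩
  loopless := by
    constructor
    rintro i ⟨h, -, h2, -⟩
    exact h2 rfl

/-- The vertex `i^n` of `S_3^n`. -/
def corner (n : ℕ) (i : Fin 3) : Fin n → Fin 3 := fun _ => i

namespace SimpleGraph

variable {V : Type*} {G : SimpleGraph V} {u v w : V}

lemma isShortest_of_length_le_dist {p : G.Walk u v} (h : p.length ≤ G.dist u v) :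
    IsShortest G p :=
  have hp : p.length = G.dist u v := le_antisymm h (dist_le p)
  ⟨p.isPath_of_length_eq_dist hp, hp⟩

lemma isShortest_cons_cons {a : V} (h₁ : G.Adj u a) (h₂ : G.Adj a v) (hne : u ≠ v)
    (hnadj : ¬G.Adj u v) : IsShortest G (.cons h₁ (.cons h₂ .nil)) := by
  refine isShortest_of_length_le_dist ?_
  obtain ⟨q, hq⟩ := (Walk.cons h₁ (.cons h₂ .nil)).reachable.exists_walk_length_eq_dist
  rw [← hq]
  rcases q with _ | ⟨h, _ | ⟨_, _⟩⟩
  · exact absurd rfl hne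
  · exact absurd h hnadj
  · simp

lemma isShortest_cons_cons_cons {a b : V} (h₁ : G.Adj u a) (h₂ : G.Adj a b) (h₃ : G.Adj b v)
    (hne : u ≠ v) (hnadj : ¬G.Adj u v) (hcommon : ∀ z, G.Adj u z → ¬G.Adj z v) :
    IsShortest G (.cons h₁ (.cons h₂ (.cons h₃ .nil))) := by
  refine isShortest_of_length_le_dist ?_
  obtain ⟨q, hq⟩ := (Walk.cons h₁ (.cons h₂ (.cons h₃ .nil))).reachable.exists_walk_length_eq_dist
  rw [← hq]
  rcases q with _ | ⟨h, _ | ⟨h', _ | ⟨_, _⟩⟩⟩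
  · exact absurd rfl hne
  · exact absurd h hnadj
  · exact absurd h' (hcommon _ h)
  · simp

lemma not_simplicial_of_mem_support {p : G.Walk u v} (hp : IsShortest G p)
    (hw : w ∈ p.support) (hwu : w ≠ u) (hwv : w ≠ v) : ¬Simplicial G w := by
  intro hsimp
  obtain ⟨q, r, rfl⟩ := Walk.mem_support_iff_exists_append.mp hw
  obtain ⟨a, hwa, q', hq'⟩ := Walk.exists_eq_cons_of_ne hwu q.reverse
  obtain ⟨b, hwb, r', rfl⟩ := Walk.exists_eq_cons_of_ne hwv r
  have hq : q'.length + 1 = q.length := by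
    simpa using congrArg Walk.length hq'.symm
  obtain ⟨s, hs⟩ : ∃ s : G.Walk a b, s.length ≤ 1 := by
    by_cases hab : a = b
    · subst hab
      exact ⟨.nil, by simp⟩
    · exact ⟨.cons (hsimp a b hwa hwb hab) .nil, by simp⟩
  have hshort := dist_le (q'.reverse.append (s.append r'))
  have hlen := hp.2
  simp only [Walk.length_append, Walk.length_reverse, Walk.length_cons] at hshort hlen
  omega

lemma not_positionable_of_mem_support {X : Set V} {p : G.Walk u v} (hp : IsShortest G p)
    (hw : w ∈ p.support) (hwX : w ∈ X) (hwu : w ≠ u) (hwv : w ≠ v) :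
    ¬Positionable G X u v := fun h => by
  rcases h p hp w hw hwX with h | h
  exacts [hwu h, hwv h]

lemma positionable_of_forall_simplicial {X : Set V} (hX : ∀ w ∈ X, Simplicial G w) (u v : V) :
    Positionable G X u v := by
  intro p hp w hw hwX
  by_contra! h
  exact not_simplicial_of_mem_support hp hw h.1 h.2 (hX w hwX)

end SimpleGraph

lemma TotalGPSet.dualGPSet {V : Type*} {G : SimpleGraph V} {X : Set V} (h : TotalGPSet G X) :
    DualGPSet G X :=
  ⟨fun u _ v _ => h u v, fun u _ v _ => h u v⟩

namespace Sierpinski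

def AdjAt {p m : ℕ} (x y : Fin m → Fin p) (h : Fin m) : Prop :=
  (∀ t, t < h → x t = y t) ∧ x h ≠ y h ∧ ∀ t, h < t → x t = y h ∧ y t = x h

/-- The extreme vertices `i^(n+1)`. -/
def IsExtreme {α : Type*} {n : ℕ} (x : Fin (n + 1) → α) : Prop := ∀ t, x t = x (Fin.last n)

variable {p n : ℕ} {x y z x' y' : Fin (n + 1) → Fin p} {k k' : Fin (n + 1)}

local infix:50 " ∼ " => SimpleGraph.Adj (Sierpinski p (n + 1))

lemma init_eq_init_iff {α : Type*} {x y : Fin (n + 1) → α} :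
    Fin.init x = Fin.init y ↔ ∀ t, t < Fin.last n → x t = y t := by
  refine ⟨fun h t ht => ?_, fun h => funext fun i => h _ (Fin.castSucc_lt_last i)⟩
  simpa [Fin.init] using congrFun h (t.castPred ht.ne)

lemma eq_of_init_eq_of_last_eq {α : Type*} {x y : Fin (n + 1) → α}
    (hinit : Fin.init x = Fin.init y) (hlast : x (Fin.last n) = y (Fin.last n)) : x = y := by
  rw [← Fin.snoc_init_self x, ← Fin.snoc_init_self y, hinit, hlast]

/- The vertices with a common `Fin.init` form a clique, a copy of `K_p`; the remaining edges,
between different cliques, are the link edges. -/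
lemma adj_of_init_eq (hinit : Fin.init x = Fin.init y) (hne : x ≠ y) : x ∼ y :=
  ⟨Fin.last n, init_eq_init_iff.mp hinit, fun h => hne (eq_of_init_eq_of_last_eq hinit h),
    fun t ht => absurd ht (Fin.le_last t).not_gt⟩

lemma exists_adjAt_lt_last (hadj : x ∼ y) (hinit : Fin.init x ≠ Fin.init y) :
    ∃ k < Fin.last n, AdjAt x y k := by
  obtain ⟨k, hk⟩ := hadj
  refine ⟨k, (Fin.le_last k).lt_of_ne ?_, hk⟩
  rintro rfl
  exact hinit (init_eq_init_iff.mpr hk.1)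

lemma AdjAt.isGreatest (h : AdjAt x y k) (hk : k < Fin.last n) :
    x k ≠ x (Fin.last n) ∧ ∀ t, k < t → x t = x (Fin.last n) := by
  have hlast := (h.2.2 _ hk).1
  exact ⟨hlast ▸ h.2.1, fun t ht => (h.2.2 t ht).1.trans hlast.symm⟩

lemma AdjAt.last_ne (h : AdjAt x y k) (hk : k < Fin.last n) :
    x (Fin.last n) ≠ y (Fin.last n) := by
  rw [(h.2.2 _ hk).1, (h.2.2 _ hk).2]
  exact h.2.1.symm

lemma AdjAt.eq_of_lt_last (h : AdjAt x y k) (h' : AdjAt x z k') (hk : k < Fin.last n)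
    (hk' : k' < Fin.last n) : k = k' := by
  have hx := h.isGreatest hk
  have hx' := h'.isGreatest hk'
  rcases lt_trichotomy k k' with hlt | heq | hgt
  exacts [absurd (hx.2 k' hlt) hx'.1, heq, absurd (hx'.2 k hgt) hx.1]

lemma eq_of_adj_of_init_ne (hy : x ∼ y) (hxy : Fin.init x ≠ Fin.init y)
    (hz : x ∼ z) (hxz : Fin.init x ≠ Fin.init z) : y = z := by
  obtain ⟨k, hk, hy⟩ := exists_adjAt_lt_last hy hxy
  obtain ⟨k', hk', hz⟩ := exists_adjAt_lt_last hz hxz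
  obtain rfl := hy.eq_of_lt_last hz hk hk'
  funext t
  rcases lt_trichotomy t k with ht | rfl | ht
  · exact (hy.1 t ht).symm.trans (hz.1 t ht)
  · exact (hy.2.2 _ hk).1.symm.trans (hz.2.2 _ hk).1
  · exact (hy.2.2 t ht).2.trans (hz.2.2 t ht).2.symm

lemma eq_of_adj_of_init_eq (hxy : x ∼ y) (hinit : Fin.init x ≠ Fin.init y)
    (hxy' : x' ∼ y') (hx : Fin.init x' = Fin.init x) (hy : Fin.init y' = Fin.init y) :
    x' = x ∧ y' = y := by
  obtain ⟨k, hk, h⟩ := exists_adjAt_lt_last hxy hinit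
  obtain ⟨k', hk', h'⟩ := exists_adjAt_lt_last hxy' (hx ▸ hy ▸ hinit)
  have hagree : ∀ t < Fin.last n, x' t = x t ∧ y' t = y t := fun t ht =>
    ⟨init_eq_init_iff.mp hx t ht, init_eq_init_iff.mp hy t ht⟩
  -- both edges sit at the first coordinate where their ends differ
  obtain rfl : k = k' := by
    rcases lt_trichotomy k k' with hlt | heq | hgt
    · exact absurd ((hagree k hk).1.symm.trans ((h'.1 k hlt).trans (hagree k hk).2)) h.2.1
    · exact heq
    · exact absurd ((hagree k' hk').1.trans ((h.1 k' hgt).trans (hagree k' hk').2.symm)) h'.2.1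
  refine ⟨eq_of_init_eq_of_last_eq hx ?_, eq_of_init_eq_of_last_eq hy ?_⟩
  · rw [(h'.2.2 _ hk).1, (h.2.2 _ hk).1, (hagree k hk).2]
  · rw [(h'.2.2 _ hk).2, (h.2.2 _ hk).2, (hagree k hk).1]

lemma exists_adj_init_ne (hx : ¬IsExtreme x) : ∃ y, x ∼ y ∧ Fin.init x ≠ Fin.init y := by
  obtain ⟨k, hk, hmax⟩ := (Finset.univ.filter fun t => x t ≠ x (Fin.last n)).exists_max_image id
    (by simpa [IsExtreme, Finset.filter_nonempty_iff] using hx)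
  simp only [Finset.mem_filter, Finset.mem_univ, true_and, id] at hk hmax
  have hkl : k < Fin.last n := (Fin.le_last k).lt_of_ne fun h => hk (h ▸ rfl)
  have hgt : ∀ t, k < t → x t = x (Fin.last n) := fun t ht => by
    by_contra h
    exact (hmax t h).not_gt ht
  let y : Fin (n + 1) → Fin p := fun t =>
    if t < k then x t else if t = k then x (Fin.last n) else x k
  have hyk : y k = x (Fin.last n) := by simp [y]
  refine ⟨y, ⟨k, fun t ht => by simp [y, ht], hyk ▸ hk, fun t ht => ?_⟩, fun h => ?_⟩
  · simp [y, ht.not_gt, ht.ne', hgt t ht]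
  · exact hk ((init_eq_init_iff.mp h k hkl).trans hyk)

lemma init_eq_of_adj_of_isExtreme (hx : IsExtreme x) (hxy : x ∼ y) : Fin.init x = Fin.init y := by
  by_contra h
  obtain ⟨k, hk, hxy⟩ := exists_adjAt_lt_last hxy h
  exact (hxy.isGreatest hk).1 (hx k)

lemma simplicial_of_isExtreme (hx : IsExtreme x) : Simplicial (Sierpinski p (n + 1)) x :=
  fun _ _ hy hz hne => adj_of_init_eq
    ((init_eq_of_adj_of_isExtreme hx hy).symm.trans (init_eq_of_adj_of_isExtreme hx hz)) hne

lemma exists_init_eq_ne (hxy : x ∼ y) (hinit : Fin.init x ≠ Fin.init y) :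
    ∃ x', Fin.init x' = Fin.init x ∧ x' ≠ x := by
  obtain ⟨k, hk, h⟩ := exists_adjAt_lt_last hxy hinit
  refine ⟨Function.update x (Fin.last n) (y (Fin.last n)), Fin.init_update_last _ _, fun he => ?_⟩
  exact h.last_ne hk (by rw [← he, Function.update_self])

lemma exists_pair_not_isExtreme_init_eq (hp : 3 ≤ p) (hx : ¬IsExtreme x) :
    ∃ y₁ y₂, Fin.init y₁ = Fin.init x ∧ Fin.init y₂ = Fin.init x ∧ y₁ ≠ y₂ ∧
      ¬IsExtreme y₁ ∧ ¬IsExtreme y₂ := by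
  obtain ⟨t, ht⟩ : ∃ t, x t ≠ x (Fin.last n) := by simpa [IsExtreme] using hx
  have htl : t ≠ Fin.last n := by rintro rfl; exact ht rfl
  have hcard : 1 < (Finset.univ.erase (x t)).card := by
    rw [Finset.card_erase_of_mem (Finset.mem_univ _), Finset.card_univ, Fintype.card_fin]
    omega
  obtain ⟨c₁, hc₁, c₂, hc₂, hc⟩ := Finset.one_lt_card.mp hcard
  have hnotExtreme : ∀ c ∈ Finset.univ.erase (x t),
      ¬IsExtreme (Function.update x (Fin.last n) c) := fun c hc h => by
    have := h t
    rw [Function.update_of_ne htl, Function.update_self] at this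
    exact Finset.ne_of_mem_erase hc this.symm
  refine ⟨_, _, Fin.init_update_last _ _, Fin.init_update_last _ _, fun h => hc ?_,
    hnotExtreme c₁ hc₁, hnotExtreme c₂ hc₂⟩
  simpa using congrFun h (Fin.last n)

variable {X : Set (Fin (n + 1) → Fin p)}

lemma not_positionable_clique_link (hxy : x ∼ y) (hinit : Fin.init x ≠ Fin.init y)
    (hx' : Fin.init x' = Fin.init x) (hne : x' ≠ x) (hx : x ∈ X) :
    ¬Positionable (Sierpinski p (n + 1)) X x' y := by
  have hx'y : x' ≠ y := by rintro rfl; exact hinit hx'.symm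
  have hnadj : ¬x' ∼ y := fun h => hne (eq_of_adj_of_init_eq hxy hinit h hx' rfl).1
  refine not_positionable_of_mem_support
    (isShortest_cons_cons (adj_of_init_eq hx' hne) hxy hx'y hnadj) (w := x) (by simp) hx
    hne.symm ?_
  rintro rfl; exact hinit rfl

lemma not_positionable_clique_link_clique (hxy : x ∼ y) (hinit : Fin.init x ≠ Fin.init y)
    (hx' : Fin.init x' = Fin.init x) (hne : x' ≠ x)
    (hy' : Fin.init y' = Fin.init y) (hne' : y' ≠ y) (hx : x ∈ X) :
    ¬Positionable (Sierpinski p (n + 1)) X x' y' := by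
  have hx'y' : x' ≠ y' := by rintro rfl; exact hinit (hx'.symm.trans hy')
  have hnadj : ¬x' ∼ y' := fun h => hne (eq_of_adj_of_init_eq hxy hinit h hx' hy').1
  have hcommon : ∀ z, x' ∼ z → ¬z ∼ y' := by
    intro z hx'z hzy'
    by_cases hzx : Fin.init z = Fin.init x
    · exact hne' (eq_of_adj_of_init_eq hxy hinit hzy' hzx hy').2
    by_cases hzy : Fin.init z = Fin.init y
    · exact hne (eq_of_adj_of_init_eq hxy hinit hx'z hx' hzy).1
    refine hx'y' (eq_of_adj_of_init_ne hx'z.symm ?_ hzy' ?_)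
    · rwa [hx']
    · rwa [hy']
  refine not_positionable_of_mem_support
    (isShortest_cons_cons_cons (adj_of_init_eq hx' hne) hxy (adj_of_init_eq hy' hne').symm
      hx'y' hnadj hcommon) (w := x) (by simp) hx hne.symm ?_
  rintro rfl; exact hinit hy'

lemma not_positionable_link_clique_link {y₁ y₂ l₁ l₂ : Fin (n + 1) → Fin p}
    (hinit : Fin.init y₁ = Fin.init y₂) (hne : y₁ ≠ y₂)
    (h₁ : y₁ ∼ l₁) (hinit₁ : Fin.init y₁ ≠ Fin.init l₁)
    (h₂ : y₂ ∼ l₂) (hinit₂ : Fin.init y₂ ≠ Fin.init l₂) (hy₁ : y₁ ∈ X) :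
    ¬Positionable (Sierpinski p (n + 1)) X l₁ l₂ := by
  have hl : Fin.init l₁ ≠ Fin.init l₂ := fun h =>
    hne (eq_of_adj_of_init_eq h₁ hinit₁ h₂ hinit.symm h.symm).1.symm
  have hl₁ : l₁ ≠ l₂ := by rintro rfl; exact hl rfl
  have hnadj : ¬l₁ ∼ l₂ := by
    intro h
    obtain rfl := eq_of_adj_of_init_ne h.symm hl.symm h₂.symm hinit₂.symm
    exact hinit₁ hinit
  have hcommon : ∀ z, l₁ ∼ z → ¬z ∼ l₂ := by
    intro z h₁z hz₂
    by_cases hz₁ : Fin.init l₁ = Fin.init z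
    · have hz₂' : Fin.init z ≠ Fin.init l₂ := hz₁ ▸ hl
      obtain rfl := eq_of_adj_of_init_ne hz₂.symm hz₂'.symm h₂.symm hinit₂.symm
      exact hinit₁ (hinit.trans hz₁.symm)
    · obtain rfl := eq_of_adj_of_init_ne h₁z hz₁ h₁.symm hinit₁.symm
      exact hl₁ (eq_of_adj_of_init_ne h₁ hinit₁ hz₂ (hinit ▸ hinit₂))
  refine not_positionable_of_mem_support
    (isShortest_cons_cons_cons h₁.symm (adj_of_init_eq hinit hne) h₂ hl₁ hnadj hcommon)
    (w := y₁) (by simp) hy₁ ?_ ?_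
  · rintro rfl; exact hinit₁ rfl
  · rintro rfl; exact hinit₂ hinit.symm

lemma isExtreme_of_mem_of_totalGPSet (hX : TotalGPSet (Sierpinski p (n + 1)) X) (hx : x ∈ X) :
    IsExtreme x := by
  by_contra hx'
  obtain ⟨y, hxy, hinit⟩ := exists_adj_init_ne hx'
  obtain ⟨x', hx', hne⟩ := exists_init_eq_ne hxy hinit
  exact not_positionable_clique_link hxy hinit hx' hne hx (hX x' y)

lemma not_mem_of_dualGPSet (hX : DualGPSet (Sierpinski p (n + 1)) X) (hx : x ∈ X)
    (hxy : x ∼ y) (hinit : Fin.init x ≠ Fin.init y) : y ∉ X := by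
  intro hy
  obtain ⟨x', hx', hne⟩ := exists_init_eq_ne hxy hinit
  obtain ⟨y', hy', hne'⟩ := exists_init_eq_ne hxy.symm hinit.symm
  have hx'X : x' ∉ X := fun h =>
    not_positionable_clique_link hxy hinit hx' hne hx (hX.1 _ h _ hy)
  have hy'X : y' ∉ X := fun h =>
    not_positionable_clique_link hxy.symm hinit.symm hy' hne' hy (hX.1 _ h _ hx)
  exact not_positionable_clique_link_clique hxy hinit hx' hne hy' hne' hx (hX.2 _ hx'X _ hy'X)

lemma isExtreme_of_mem_of_dualGPSet (hp : 3 ≤ p) (hX : DualGPSet (Sierpinski p (n + 1)) X)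
    (hx : x ∈ X) : IsExtreme x := by
  by_contra hx'
  obtain ⟨y, hxy, hinit⟩ := exists_adj_init_ne hx'
  have hclique : ∀ x', Fin.init x' = Fin.init x → x' ∈ X := by
    intro x' hx'x
    by_contra hx'X
    have hne : x' ≠ x := by rintro rfl; exact hx'X hx
    exact not_positionable_clique_link hxy hinit hx'x hne hx
      (hX.2 _ hx'X _ (not_mem_of_dualGPSet hX hx hxy hinit))
  obtain ⟨y₁, y₂, hy₁x, hy₂x, hne, hy₁, hy₂⟩ := exists_pair_not_isExtreme_init_eq hp hx'
  obtain ⟨l₁, h₁, hinit₁⟩ := exists_adj_init_ne hy₁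
  obtain ⟨l₂, h₂, hinit₂⟩ := exists_adj_init_ne hy₂
  exact not_positionable_link_clique_link (hy₁x.trans hy₂x.symm) hne h₁ hinit₁ h₂ hinit₂
    (hclique _ hy₁x) (hX.2 _ (not_mem_of_dualGPSet hX (hclique _ hy₁x) h₁ hinit₁)
      _ (not_mem_of_dualGPSet hX (hclique _ hy₂x) h₂ hinit₂))

lemma totalGPSet_setOf_isExtreme :
    TotalGPSet (Sierpinski p (n + 1)) {x | IsExtreme x} :=
  positionable_of_forall_simplicial fun _ hx => simplicial_of_isExtreme hx

end Sierpinski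

section MaxCard

variable {V : Type*} {P : Set V → Prop} {C : Set V}

lemma maxCard_eq_ncard (hC : C.Finite) (hPC : P C) (hmax : ∀ X, P X → X ⊆ C) :
    maxCard P = C.ncard := by
  have hle : ∀ k ∈ {k | ∃ X, P X ∧ X.ncard = k}, k ≤ C.ncard := by
    rintro _ ⟨X, hX, rfl⟩
    exact Set.ncard_le_ncard (hmax X hX) hC
  exact le_antisymm (csSup_le ⟨_, C, hPC, rfl⟩ hle) (le_csSup ⟨_, hle⟩ ⟨C, hPC, rfl⟩)

lemma setOf_and_ncard_eq_eq_singleton (hC : C.Finite) (hPC : P C) (hmax : ∀ X, P X → X ⊆ C) :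
    {X | P X ∧ X.ncard = C.ncard} = {C} := by
  ext X
  refine ⟨fun ⟨hX, hcard⟩ => Set.eq_of_subset_of_ncard_le (hmax X hX) hcard.ge hC, ?_⟩
  rintro rfl
  exact ⟨hPC, rfl⟩

end MaxCard

lemma setOf_isExtreme_eq_corners (n : ℕ) :
    {x : Fin (n + 1) → Fin 3 | Sierpinski.IsExtreme x} =
      {corner (n + 1) 0, corner (n + 1) 1, corner (n + 1) 2} := by
  ext x
  refine ⟨fun hx => ?_, by rintro (rfl | rfl | rfl) <;> exact fun _ => rfl⟩
  rw [show x = corner (n + 1) (x (Fin.last n)) from funext hx]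
  generalize x (Fin.last n) = c
  fin_cases c <;> simp

lemma ncard_corners (n : ℕ) :
    ({corner (n + 1) 0, corner (n + 1) 1, corner (n + 1) 2} : Set (Fin (n + 1) → Fin 3)).ncard
      = 3 := by
  have hinj : Function.Injective (corner (n + 1)) := fun _ _ h => congrFun h 0
  exact Set.ncard_eq_three.mpr ⟨_, _, _, hinj.ne (by decide), hinj.ne (by decide),
    hinj.ne (by decide), rfl⟩

/-- `gp_t(S_3^n) = gp_d(S_3^n) = 3`, and in each case `{0^n,1^n,2^n}` is the unique
maximum set. -/
theorem stmt_12 (n : ℕ) (hn : 1 ≤ n) :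
    maxCard (TotalGPSet (Sierpinski 3 n)) = 3 ∧
    maxCard (DualGPSet (Sierpinski 3 n)) = 3 ∧
    {X : Set (Fin n → Fin 3) | TotalGPSet (Sierpinski 3 n) X ∧ X.ncard = 3} =
      {({corner n 0, corner n 1, corner n 2} : Set (Fin n → Fin 3))} ∧
    {X : Set (Fin n → Fin 3) | DualGPSet (Sierpinski 3 n) X ∧ X.ncard = 3} =
      {({corner n 0, corner n 1, corner n 2} : Set (Fin n → Fin 3))} := by
  obtain ⟨m, rfl⟩ : ∃ m, n = m + 1 := ⟨n - 1, by omega⟩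
  have htotal := Sierpinski.totalGPSet_setOf_isExtreme (p := 3) (n := m)
  have hsubTotal : ∀ X, TotalGPSet (Sierpinski 3 (m + 1)) X → X ⊆ {x | Sierpinski.IsExtreme x} :=
    fun _ hX _ => Sierpinski.isExtreme_of_mem_of_totalGPSet hX
  have hsubDual : ∀ X, DualGPSet (Sierpinski 3 (m + 1)) X → X ⊆ {x | Sierpinski.IsExtreme x} :=
    fun _ hX _ => Sierpinski.isExtreme_of_mem_of_dualGPSet le_rfl hX
  rw [setOf_isExtreme_eq_corners] at htotal hsubTotal hsubDual
  have h₁ := maxCard_eq_ncard (Set.toFinite _) htotal hsubTotal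
  have h₂ := maxCard_eq_ncard (Set.toFinite _) htotal.dualGPSet hsubDual
  have h₃ := setOf_and_ncard_eq_eq_singleton (Set.toFinite _) htotal hsubTotal
  have h₄ := setOf_and_ncard_eq_eq_singleton (Set.toFinite _) htotal.dualGPSet hsubDual
  rw [ncard_corners] at h₁ h₂ h₃ h₄
  exact ⟨h₁, h₂, h₃, h₄⟩
end
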